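/- arXiv:2207.05868 — 3 statements merged into one kernel-verified Lean document; each statement's English description precedes it below -/
import Mathlib

section
/- For every integer m ≥ 2 and every positive integer p divisible by m, consider the instance of scheduling on m identical machines whose conflict graph is the disjoint union of m cliques, each on m − 1 jobs of processing time p/m, together with one additional isolated job of processing time p. Then: (i) the optimal makespan over proper schedules equals p; (ii) there exists a proper schedule of all jobs except the isolated one under which every machine has load exactly p(m−1)/m; and (iii) every proper schedule of all jobs extending the partial schedule from (ii) has makespan exactly p(2 − 1/m). -/
/-- The job set of the hard instance: `m` cliques of `m - 1` jobs each,
plus one extra isolated job. -/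
abbrev HardJobs (m : ℕ) : Type := (Fin m × Fin (m - 1)) ⊕ Unit

/-- The conflict graph of the hard instance: two jobs are in conflict iff they
belong to the same clique (same first coordinate); the extra job is isolated. -/
def hardGraph (m : ℕ) : SimpleGraph (HardJobs m) :=
  SimpleGraph.fromRel (fun x y =>
    ∃ (a : Fin m) (b b' : Fin (m - 1)), x = Sum.inl (a, b) ∧ y = Sum.inl (a, b'))

/-- Processing times of the hard instance: `p / m` for the clique jobs and `p`
for the isolated job. -/
def hardTime (m p : ℕ) : HardJobs m → ℕ :=
  Sum.elim (fun _ => p / m) (fun _ => p)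

/-!
The isolated job alone forces makespan `p`, and `p` is attained by putting it alone on one
machine and spreading every clique over the other `m - 1` machines (each then carries `m`
jobs of length `p / m`). In the cyclic schedule, where clique `a` skips exactly one machine
and distinct cliques skip distinct machines, every machine carries `(m - 1) · p / m`, so the
machine that receives the isolated job ends at `p + (m - 1) · p / m = p (2 - 1/m)`.
-/

open Finset Function

section Scheduling

variable {J M : Type*}

def IsProperSchedule (G : SimpleGraph J) (σ : J → M) : Prop :=
  ∀ u v, G.Adj u v → σ u ≠ σ v

variable [Fintype J] [DecidableEq M]

def load (t : J → ℕ) (σ : J → M) (i : M) : ℕ :=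
  ∑ j ∈ univ.filter (fun j => σ j = i), t j

def makespan [Fintype M] (t : J → ℕ) (σ : J → M) : ℕ :=
  univ.sup (load t σ)

lemma load_const (c : ℕ) (σ : J → M) (i : M) :
    load (fun _ => c) σ i = #{j | σ j = i} * c := by
  rw [load, sum_const, smul_eq_mul]

variable [Fintype M]

lemma le_makespan (t : J → ℕ) (σ : J → M) (j : J) : t j ≤ makespan t σ :=
  calc t j ≤ load t σ (σ j) := single_le_sum (fun _ _ => Nat.zero_le _) (by simp)
    _ ≤ makespan t σ := le_sup (f := load t σ) (mem_univ _)

lemma makespan_eq_of_load_le {t : J → ℕ} {σ : J → M} {c : ℕ}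
    (hle : ∀ i, load t σ i ≤ c) (i₀ : M) (hi₀ : load t σ i₀ = c) : makespan t σ = c :=
  le_antisymm (Finset.sup_le fun i _ => hle i) (hi₀ ▸ le_sup (f := load t σ) (mem_univ i₀))

end Scheduling

lemma card_filter_fst_add_eq {G β : Type*} [AddGroup G] [Fintype G] [DecidableEq G]
    [Fintype β] (g : β → G) (i : G) :
    #{x : G × β | x.1 + g x.2 = i} = Fintype.card β := by
  rw [Finset.card_filter, Fintype.sum_prod_type_right]
  simp [← eq_sub_iff_add_eq]

lemma card_filter_snd_le {α β M : Type*} [Fintype α] [Fintype β] [DecidableEq M]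
    {e : β → M} (he : Injective e) (i : M) :
    #{x : α × β | e x.2 = i} ≤ Fintype.card α :=
  card_le_card_of_injOn Prod.fst (fun _ _ => mem_univ _) fun _ hx _ hy hxy =>
    Prod.ext hxy (he (((mem_filter.1 hx).2).trans ((mem_filter.1 hy).2).symm))

namespace HardInstance

variable {m : ℕ}

lemma isProperSchedule_of_injOn_cliques {M : Type*} {σ : HardJobs m → M}
    (h : ∀ a b b', b ≠ b' → σ (.inl (a, b)) ≠ σ (.inl (a, b'))) :
    IsProperSchedule (hardGraph m) σ := by
  rintro u v ⟨hne, ⟨a, b, b', rfl, rfl⟩ | ⟨a, b, b', rfl, rfl⟩⟩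
  · exact h a b b' fun hb => hne (by rw [hb])
  · exact (h a b b' fun hb => hne (by rw [hb])).symm

lemma load_hardTime {p : ℕ} (σ : HardJobs m → Fin m) (i : Fin m) :
    load (hardTime m p) σ i =
      #{x | σ (.inl x) = i} * (p / m) + if σ (.inr ()) = i then p else 0 := by
  rw [load, sum_filter, Fintype.sum_sum_type, Finset.card_filter, sum_mul]
  simp [hardTime]

variable [NeZero m]

def lastMachine (m : ℕ) [NeZero m] : Fin m := ⟨m - 1, Nat.sub_one_lt (NeZero.ne m)⟩

def optimalSchedule (m : ℕ) [NeZero m] : HardJobs m → Fin m :=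
  Sum.elim (fun x => Fin.castLE (Nat.sub_le m 1) x.2) (fun _ => lastMachine m)

lemma isProperSchedule_optimalSchedule :
    IsProperSchedule (hardGraph m) (optimalSchedule m) :=
  isProperSchedule_of_injOn_cliques fun _ _ _ hb => (Fin.castLE_injective (Nat.sub_le m 1)).ne hb

lemma makespan_optimalSchedule (p : ℕ) :
    makespan (hardTime m p) (optimalSchedule m) = p := by
  have hinl : ∀ x, optimalSchedule m (.inl x) ≠ lastMachine m := fun x h => by
    have := x.2.isLt
    simp only [optimalSchedule, lastMachine, Sum.elim_inl, Fin.ext_iff, Fin.val_castLE] at h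
    lia
  have hinr : optimalSchedule m (.inr ()) = lastMachine m := rfl
  refine makespan_eq_of_load_le (fun i => ?_) (lastMachine m) (by simp [load_hardTime, hinl, hinr])
  rw [load_hardTime, hinr]
  by_cases hi : i = lastMachine m
  · simp [hi, hinl]
  · calc _ = #{x | optimalSchedule m (.inl x) = i} * (p / m) := by simp [Ne.symm hi]
      _ ≤ m * (p / m) := Nat.mul_le_mul_right _
          ((card_filter_snd_le (Fin.castLE_injective (Nat.sub_le m 1)) i).trans
            (Fintype.card_fin m).le)
      _ ≤ p := Nat.mul_div_le p m

def cyclicSchedule (m : ℕ) [NeZero m] (x : Fin m × Fin (m - 1)) : Fin m :=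
  x.1 + Fin.castLE (Nat.sub_le m 1) x.2

lemma isProperSchedule_cyclicSchedule (τ : Unit → Fin m) :
    IsProperSchedule (hardGraph m) (Sum.elim (cyclicSchedule m) τ) :=
  isProperSchedule_of_injOn_cliques fun _ _ _ hb h =>
    hb (Fin.castLE_injective _ (add_left_cancel h))

lemma card_filter_cyclicSchedule_eq (i : Fin m) :
    #{x | cyclicSchedule m x = i} = m - 1 :=
  (card_filter_fst_add_eq _ i).trans (Fintype.card_fin _)

lemma load_cyclicSchedule (c : ℕ) (i : Fin m) :
    load (fun _ => c) (cyclicSchedule m) i = (m - 1) * c := by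
  rw [load_const, card_filter_cyclicSchedule_eq]

lemma makespan_of_extends_cyclicSchedule {p : ℕ} (hdvd : m ∣ p)
    {σ : HardJobs m → Fin m} (hext : ∀ x, σ (.inl x) = cyclicSchedule m x) :
    makespan (hardTime m p) σ = 2 * p - p / m := by
  have hq : m * (p / m) = p := Nat.mul_div_cancel' hdvd
  have hload : ∀ i, load (hardTime m p) σ i =
      (m - 1) * (p / m) + if σ (.inr ()) = i then p else 0 := fun i => by
    simp only [load_hardTime, hext, card_filter_cyclicSchedule_eq]
  have hsub : (m - 1) * (p / m) + p = 2 * p - p / m := by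
    rw [Nat.sub_one_mul, hq]
    have := Nat.div_le_self p m
    lia
  refine makespan_eq_of_load_le (fun i => ?_) (σ (.inr ())) ?_ <;> rw [hload]
  · split_ifs <;> lia
  · rw [if_pos rfl, hsub]

end HardInstance

open HardInstance in
theorem hard_instance_tightness_general (m p : ℕ) (hm : 2 ≤ m) (hdvd : m ∣ p) :
    -- (i) the optimal makespan equals p
    ((∃ σ : HardJobs m → Fin m,
        (∀ u v, (hardGraph m).Adj u v → σ u ≠ σ v) ∧
        (Finset.univ.sup fun i : Fin m =>
          ∑ j ∈ Finset.univ.filter (fun j => σ j = i), hardTime m p j) = p) ∧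
      (∀ σ : HardJobs m → Fin m, (∀ u v, (hardGraph m).Adj u v → σ u ≠ σ v) →
        p ≤ Finset.univ.sup fun i : Fin m =>
          ∑ j ∈ Finset.univ.filter (fun j => σ j = i), hardTime m p j)) ∧
    -- (ii) and (iii)
    (∃ σ₀ : Fin m × Fin (m - 1) → Fin m,
      (∀ x y : Fin m × Fin (m - 1),
        (hardGraph m).Adj (Sum.inl x) (Sum.inl y) → σ₀ x ≠ σ₀ y) ∧
      (∀ i : Fin m,
        (∑ x ∈ Finset.univ.filter (fun x : Fin m × Fin (m - 1) => σ₀ x = i),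
          hardTime m p (Sum.inl x)) = (m - 1) * (p / m)) ∧
      (∀ σ : HardJobs m → Fin m,
        (∀ u v, (hardGraph m).Adj u v → σ u ≠ σ v) →
        (∀ x, σ (Sum.inl x) = σ₀ x) →
        (Finset.univ.sup fun i : Fin m =>
          ∑ j ∈ Finset.univ.filter (fun j => σ j = i), hardTime m p j)
            = 2 * p - p / m)) := by
  have : NeZero m := ⟨by lia⟩
  refine ⟨⟨⟨optimalSchedule m, isProperSchedule_optimalSchedule,
      makespan_optimalSchedule p⟩, fun σ _ => le_makespan (hardTime m p) σ (.inr ())⟩,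
    cyclicSchedule m, fun x y => isProperSchedule_cyclicSchedule (fun _ => 0) _ _,
    load_cyclicSchedule (p / m), fun σ _ hext => makespan_of_extends_cyclicSchedule hdvd hext⟩

/-- For `m ≥ 2` machines and `p > 0` divisible by `m`: (i) the optimal makespan of the
hard instance is exactly `p`; (ii) there is a proper schedule `σ₀` of the clique jobs
giving every machine load exactly `(m-1)·p/m`; and (iii) every proper schedule of all
jobs extending `σ₀` has makespan exactly `2p - p/m = p(2 - 1/m)`. -/
theorem hard_instance_tightness (m p : ℕ) (hm : 2 ≤ m) (hp : 0 < p) (hdvd : m ∣ p) :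
    -- (i) the optimal makespan equals p
    ((∃ σ : HardJobs m → Fin m,
        (∀ u v, (hardGraph m).Adj u v → σ u ≠ σ v) ∧
        (Finset.univ.sup fun i : Fin m =>
          ∑ j ∈ Finset.univ.filter (fun j => σ j = i), hardTime m p j) = p) ∧
      (∀ σ : HardJobs m → Fin m, (∀ u v, (hardGraph m).Adj u v → σ u ≠ σ v) →
        p ≤ Finset.univ.sup fun i : Fin m =>
          ∑ j ∈ Finset.univ.filter (fun j => σ j = i), hardTime m p j)) ∧
    -- (ii) and (iii)
    (∃ σ₀ : Fin m × Fin (m - 1) → Fin m,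
      (∀ x y : Fin m × Fin (m - 1),
        (hardGraph m).Adj (Sum.inl x) (Sum.inl y) → σ₀ x ≠ σ₀ y) ∧
      (∀ i : Fin m,
        (∑ x ∈ Finset.univ.filter (fun x : Fin m × Fin (m - 1) => σ₀ x = i),
          hardTime m p (Sum.inl x)) = (m - 1) * (p / m)) ∧
      (∀ σ : HardJobs m → Fin m,
        (∀ u v, (hardGraph m).Adj u v → σ u ≠ σ v) →
        (∀ x, σ (Sum.inl x) = σ₀ x) →
        (Finset.univ.sup fun i : Fin m =>
          ∑ j ∈ Finset.univ.filter (fun j => σ j = i), hardTime m p j)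
            = 2 * p - p / m)) :=
  hard_instance_tightness_general m p hm hdvd
end

section
/- Let G be a block graph with n ≥ 1 vertices and clique number ω(G) ≤ m, where m ≥ 2, and write n = d(m−1) + r with integers d ≥ 0 and 0 ≤ r ≤ m−2. Then G has a proper m-coloring in which every color class has at most ⌈n/(m−1)⌉ vertices; moreover, if r = 0 then at least one color class has strictly fewer than ⌈n/(m−1)⌉ vertices, and if r > 0 then at least m − r color classes have strictly fewer than ⌈n/(m−1)⌉ vertices. -/
/-!
Colour the blocks in the order of the cover. A block meets the earlier ones in at most one
vertex, so its `s` new vertices need `s` distinct colours avoiding the colour of that vertex; give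
them the `s` least loaded such colours. With `t` vertices coloured, the invariant kept is that for
every `j < m` at most `j` colours have load above `⌈(t - j)/(m - 1)⌉`. At the end (`t = n`),
`j = 0` bounds every class by `⌈n/(m - 1)⌉`, `j = r` leaves `m - r` classes of size at most `d`,
and for `r = 0` classes summing to `d(m - 1) < dm` cannot all have size `d`.
-/

/-- `Bs` is a list of cliques (blocks) witnessing that `G` is a block graph:
the cliques cover all vertices and all edges, and each clique shares at most
one vertex with the union of the preceding ones. -/
def IsBlockGraphCover {V : Type*} (G : SimpleGraph V) (Bs : List (Finset V)) : Prop :=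
  (∀ B ∈ Bs, G.IsClique (B : Set V)) ∧
  (∀ v : V, ∃ B ∈ Bs, v ∈ B) ∧
  (∀ u v : V, G.Adj u v → ∃ B ∈ Bs, u ∈ B ∧ v ∈ B) ∧
  (∀ (i : ℕ) (hi : i < Bs.length), ∀ u ∈ Bs.get ⟨i, hi⟩, ∀ w ∈ Bs.get ⟨i, hi⟩,
    (∃ (j : ℕ) (hj : j < i), u ∈ Bs.get ⟨j, hj.trans hi⟩) →
    (∃ (j : ℕ) (hj : j < i), w ∈ Bs.get ⟨j, hj.trans hi⟩) → u = w)

def IsBlockGraph {V : Type*} (G : SimpleGraph V) : Prop :=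
  ∃ Bs : List (Finset V), IsBlockGraphCover G Bs

open Finset

theorem Finset.exists_subset_card_eq_forall_le {α β : Type*} [DecidableEq α] [LinearOrder β]
    (f : α → β) (A : Finset α) {s : ℕ} (hs : s ≤ #A) :
    ∃ S ⊆ A, #S = s ∧ ∀ y ∈ S, ∀ x ∈ A \ S, f y ≤ f x := by
  induction s with
  | zero => exact ⟨∅, empty_subset _, card_empty, by simp⟩
  | succ s ih =>
    obtain ⟨S, hSA, hS, hmin⟩ := ih (by omega)
    have hne : (A \ S).Nonempty := by rw [← card_pos, card_sdiff_of_subset hSA]; omega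
    obtain ⟨y, hy, hymin⟩ := exists_min_image (A \ S) f hne
    have hyS := (mem_sdiff.1 hy).2
    refine ⟨insert y S, insert_subset (mem_sdiff.1 hy).1 hSA, by rw [card_insert_of_notMem hyS, hS],
      ?_⟩
    intro z hz x hx
    have hxS : x ∈ A \ S := sdiff_subset_sdiff le_rfl (subset_insert y S) hx
    rcases mem_insert.1 hz with rfl | hzS
    · exact hymin x hxS
    · exact hmin z hzS x hxS

theorem Nat.div_lt_div_of_add_le {a b k : ℕ} (hk : 0 < k) (h : a + k ≤ b) : a / k < b / k :=
  calc a / k < a / k + 1 := Nat.lt_succ_self _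
    _ = (a + k) / k := (Nat.add_div_right a hk).symm
    _ ≤ b / k := Nat.div_le_div_right h

theorem Nat.mul_add_sub_two_div {m : ℕ} (hm : 2 ≤ m) (d : ℕ) :
    (d * (m - 1) + m - 2) / (m - 1) = d :=
  Nat.div_eq_of_lt_le (by omega) (by rw [Nat.add_one_mul]; omega)

namespace BlockGraph

/-- In ℕ, `(a + m - 2) / (m - 1) = ⌈a / (m - 1)⌉`, and `t - j` is truncated at `0`. -/
def IsBalanced (m t : ℕ) (ℓ : Fin m → ℕ) : Prop :=
  ∀ j < m, #{x | (t - j + m - 2) / (m - 1) < ℓ x} ≤ j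

theorem isBalanced_zero (m : ℕ) : IsBalanced m 0 fun _ => 0 := by
  intro j _
  simp

section IsBalanced

variable {m t : ℕ} {ℓ : Fin m → ℕ}

theorem IsBalanced.le (h : IsBalanced m t ℓ) (x : Fin m) : ℓ x ≤ (t + m - 2) / (m - 1) := by
  by_contra! hx
  have hpos : 0 < #{x | (t - 0 + m - 2) / (m - 1) < ℓ x} := card_pos.2 ⟨x, by simpa using hx⟩
  have := h 0 x.pos
  omega

theorem IsBalanced.sub_le_card_filter_le (h : IsBalanced m t ℓ) {j : ℕ} (hj : j < m) :
    m - j ≤ #{x | ℓ x ≤ (t - j + m - 2) / (m - 1)} := by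
  have hsplit := card_filter_add_card_filter_not (s := univ)
    (fun x => ℓ x ≤ (t - j + m - 2) / (m - 1))
  simp only [not_le, card_univ, Fintype.card_fin] at hsplit
  have := h j hj
  omega

variable {s : ℕ} {F S : Finset (Fin m)}

theorem IsBalanced.card_filter_lt_add_le_of_le (h : IsBalanced m t ℓ) (hS : #S = s) {j : ℕ}
    (hj : j < m) (hsj : s ≤ j) :
    #{x | (t + s - j + m - 2) / (m - 1) < ℓ x + if x ∈ S then 1 else 0} ≤ j := by
  have hsub : ({x | (t + s - j + m - 2) / (m - 1) < ℓ x + if x ∈ S then 1 else 0} :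
      Finset (Fin m)) ⊆ ({x | (t - (j - s) + m - 2) / (m - 1) < ℓ x} : Finset (Fin m)) ∪ S := by
    intro x hx
    by_cases hxS : x ∈ S
    · exact mem_union_right _ hxS
    · simp only [mem_filter, mem_univ, true_and, hxS, if_false, add_zero] at hx
      exact mem_union_left _ (by simpa [show t - (j - s) = t + s - j by omega] using hx)
  calc _ ≤ #(({x | (t - (j - s) + m - 2) / (m - 1) < ℓ x} : Finset (Fin m)) ∪ S) :=
        card_le_card hsub
    _ ≤ (j - s) + s := (card_union_le _ _).trans (add_le_add (h _ (by omega)) hS.le)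
    _ = j := by omega

/-- If some colour of `S` were overloaded, every colour outside `F ∪ S` would be at least as
loaded, and together they would exceed the bound at `j + (m - s - #F)` before the step. -/
theorem IsBalanced.card_filter_lt_add_le_of_lt (h : IsBalanced m t ℓ) (hm : 2 ≤ m)
    (hS : #S = s) (hSF : Disjoint S F) (hF : #F ≤ 1) (hsF : s + #F ≤ m)
    (hmin : ∀ y ∈ S, ∀ x ∈ (Fᶜ \ S), ℓ y ≤ ℓ x) {j : ℕ} (hjs : j < s) :
    #{x | (t + s - j + m - 2) / (m - 1) < ℓ x + if x ∈ S then 1 else 0} ≤ j := by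
  set T := (t + s - j + m - 2) / (m - 1)
  set bad : Finset (Fin m) := {x | T < ℓ x + if x ∈ S then 1 else 0}
  by_contra! hbad
  have hℓT : ∀ x, ℓ x ≤ T := fun x => (h.le x).trans (Nat.div_le_div_right (by omega))
  have hbadS : ∀ x ∈ bad, x ∈ S ∧ ℓ x = T := by
    intro x hx
    have := hℓT x
    simp only [bad, mem_filter, mem_univ, true_and] at hx
    split_ifs at hx with hxS
    · exact ⟨hxS, by omega⟩
    · omega
  obtain ⟨y, hy⟩ : bad.Nonempty := card_pos.1 (by omega)
  obtain ⟨hyS, hyT⟩ := hbadS y hy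
  set i := j + (m - s - #F)
  have hKi : (t - i + m - 2) / (m - 1) < T := by
    rcases le_or_gt t i with hti | hti
    · rw [Nat.sub_eq_zero_of_le hti, Nat.div_eq_of_lt (by omega)]
      exact Nat.div_pos (by omega) (by omega)
    · exact Nat.div_lt_div_of_add_le (by omega) (by omega)
  have hsub : bad ∪ (Fᶜ \ S) ⊆ ({x | (t - i + m - 2) / (m - 1) < ℓ x} : Finset (Fin m)) := by
    intro x hx
    simp only [mem_filter, mem_univ, true_and]
    rcases mem_union.1 hx with hx | hx
    · exact (hbadS x hx).2 ▸ hKi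
    · exact hKi.trans_le (hyT ▸ hmin y hyS x hx)
  have hdisj : Disjoint bad (Fᶜ \ S) :=
    disjoint_left.2 fun x hx hx' => (mem_sdiff.1 hx').2 (hbadS x hx).1
  have hcard : #(Fᶜ \ S) = m - #F - s := by
    rw [card_sdiff_of_subset (subset_compl_iff_disjoint_right.2 hSF), card_compl,
      Fintype.card_fin, hS]
  have := card_le_card hsub
  rw [card_union_of_disjoint hdisj, hcard] at this
  have := h i (by omega)
  omega

theorem IsBalanced.exists_add_indicator (h : IsBalanced m t ℓ) (hm : 2 ≤ m) (hF : #F ≤ 1)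
    (hsF : s + #F ≤ m) :
    ∃ S : Finset (Fin m), #S = s ∧ Disjoint S F ∧
      IsBalanced m (t + s) fun x => ℓ x + if x ∈ S then 1 else 0 := by
  obtain ⟨S, hSF, hS, hmin⟩ := exists_subset_card_eq_forall_le ℓ Fᶜ (s := s)
    (by rw [card_compl, Fintype.card_fin]; omega)
  have hSF : Disjoint S F := subset_compl_iff_disjoint_right.1 hSF
  refine ⟨S, hS, hSF, fun j hj => ?_⟩
  rcases le_or_gt s j with hsj | hjs
  · exact h.card_filter_lt_add_le_of_le hS hj hsj
  · exact h.card_filter_lt_add_le_of_lt hm hS hSF hF hsF hmin hjs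

end IsBalanced

section Extension

variable {V α : Type*}

theorem exists_bijOn_forall_notMem_eq (c : V → α) {N : Finset V} {S : Finset α}
    (h : #N = #S) : ∃ c' : V → α, Set.BijOn c' N S ∧ ∀ v ∉ N, c' v = c v := by
  classical
  let e := N.equivOfCardEq h
  refine ⟨fun v => if hv : v ∈ N then e ⟨v, hv⟩ else c v, ⟨?_, ?_, ?_⟩, fun v hv => dif_neg hv⟩
  · intro v hv
    simp [dif_pos (mem_coe.1 hv)]
  · intro v hv w hw hvw
    simp only [dif_pos (mem_coe.1 hv), dif_pos (mem_coe.1 hw)] at hvw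
    simpa using e.injective (Subtype.ext hvw)
  · intro x hx
    refine ⟨e.symm ⟨x, hx⟩, (e.symm ⟨x, hx⟩).2, ?_⟩
    simp

theorem card_filter_eq_of_bijOn [DecidableEq α] {c : V → α} {N : Finset V} {S : Finset α}
    (h : Set.BijOn c N S) (x : α) : #{v ∈ N | c v = x} = if x ∈ S then 1 else 0 := by
  split_ifs with hx
  · obtain ⟨v, hv, rfl⟩ := h.surjOn hx
    refine card_eq_one.2 ⟨v, ext fun w => ?_⟩
    simp only [mem_filter, mem_singleton]
    exact ⟨fun hw => h.injOn hw.1 hv hw.2, by rintro rfl; exact ⟨hv, rfl⟩⟩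
  · exact card_eq_zero.2 (filter_eq_empty_iff.2 fun v hv hvx => hx (hvx ▸ h.mapsTo hv))

end Extension

section Blocks

variable {V : Type*} [DecidableEq V]

theorem exists_injOn_isBalanced {m : ℕ} (hm : 2 ≤ m) (Bs : List (Finset V))
    (hcard : ∀ B ∈ Bs, #B ≤ m)
    (hsep : ∀ pre B post, Bs = pre ++ B :: post → #(B ∩ pre.toFinset.biUnion id) ≤ 1) :
    ∃ c : V → Fin m, (∀ B ∈ Bs, Set.InjOn c B) ∧
      IsBalanced m #(Bs.toFinset.biUnion id) fun x => #{v ∈ Bs.toFinset.biUnion id | c v = x} := by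
  induction Bs using List.reverseRecOn with
  | nil => exact ⟨fun _ => ⟨0, by omega⟩, by simp, by simpa using isBalanced_zero m⟩
  | append_singleton Bs B ih =>
    obtain ⟨c, hinj, hbal⟩ := ih (fun B' hB' => hcard B' (by simp [hB']))
      (fun pre B' post h => hsep pre B' (post ++ [B]) (by simp [h]))
    set U := Bs.toFinset.biUnion id
    set F := (B ∩ U).image c
    have hBU : #(B ∩ U) ≤ 1 := hsep Bs B [] rfl
    have hF : #F ≤ 1 := card_image_le.trans hBU
    have hNF : #(B \ U) + #F ≤ m := by
      have := card_sdiff_add_card_inter B U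
      have := hcard B (by simp)
      have : #F ≤ #(B ∩ U) := card_image_le
      omega
    obtain ⟨S, hS, hSF, hbal'⟩ := hbal.exists_add_indicator hm hF hNF
    obtain ⟨c', hbij, hc'⟩ := exists_bijOn_forall_notMem_eq c hS.symm
    have hUB : (Bs ++ [B]).toFinset.biUnion id = U ∪ B \ U := by
      ext v
      simp [U, or_comm]
    have hold : ∀ v ∈ U, c' v = c v := fun v hv => hc' v fun hvN => (mem_sdiff.1 hvN).2 hv
    refine ⟨c', ?_, ?_⟩
    · simp only [List.mem_append, List.mem_singleton]
      rintro B' (hB' | rfl)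
      · refine (hinj B' hB').congr fun v hv => (hold v ?_).symm
        exact mem_biUnion.2 ⟨B', List.mem_toFinset.2 hB', hv⟩
      · rw [← sdiff_union_inter B' U, coe_union,
          Set.injOn_union (disjoint_coe.2 (disjoint_sdiff_inter B' U))]
        refine ⟨hbij.injOn, (card_le_one_iff_subsingleton.1 hBU).injOn c', ?_⟩
        intro v hv w hw hvw
        rw [hold w (mem_inter.1 hw).2] at hvw
        exact disjoint_left.1 hSF (hvw ▸ hbij.mapsTo hv) (mem_image_of_mem c hw)
    · rw [hUB, card_union_of_disjoint disjoint_sdiff]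
      convert hbal' using 5 with x
      rw [filter_union, card_union_of_disjoint (disjoint_filter_filter disjoint_sdiff),
        card_filter_eq_of_bijOn hbij, filter_congr fun v hv => by rw [hold v hv]]

end Blocks

end BlockGraph

namespace IsBlockGraphCover

variable {V : Type*} {G : SimpleGraph V} {Bs : List (Finset V)}

theorem card_inter_le_one [DecidableEq V] (h : IsBlockGraphCover G Bs)
    {pre post : List (Finset V)} {B : Finset V} (hBs : Bs = pre ++ B :: post) :
    #(B ∩ pre.toFinset.biUnion id) ≤ 1 := by
  subst hBs
  refine card_le_one.2 fun u hu w hw => ?_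
  simp only [mem_inter, mem_biUnion, List.mem_toFinset, id] at hu hw
  obtain ⟨huB, Bu, hBu, huBu⟩ := hu
  obtain ⟨hwB, Bw, hBw, hwBw⟩ := hw
  obtain ⟨j, hj, rfl⟩ := List.mem_iff_getElem.1 hBu
  obtain ⟨k, hk, rfl⟩ := List.mem_iff_getElem.1 hBw
  exact h.2.2.2 pre.length (by simp) u (by simpa using huB) w (by simpa using hwB)
    ⟨j, hj, by simpa [List.getElem_append_left hj] using huBu⟩
    ⟨k, hk, by simpa [List.getElem_append_left hk] using hwBw⟩

theorem biUnion_eq_univ [DecidableEq V] [Fintype V] (h : IsBlockGraphCover G Bs) :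
    Bs.toFinset.biUnion id = univ :=
  eq_univ_of_forall fun v =>
    let ⟨B, hB, hv⟩ := h.2.1 v
    mem_biUnion.2 ⟨B, List.mem_toFinset.2 hB, hv⟩

theorem adj_ne_of_injOn (h : IsBlockGraphCover G Bs) {α : Type*} {c : V → α}
    (hc : ∀ B ∈ Bs, Set.InjOn c B) {u v : V} (huv : G.Adj u v) : c u ≠ c v :=
  let ⟨B, hB, hu, hv⟩ := h.2.2.1 u v huv
  fun hcuv => huv.ne (hc B hB hu hv hcuv)

end IsBlockGraphCover

theorem block_graph_balanced_coloring_general {V : Type*} [Fintype V]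
    (G : SimpleGraph V) (hG : IsBlockGraph G)
    (m : ℕ) (hm : 2 ≤ m)
    (hn : 1 ≤ Fintype.card V)
    (hω : ∀ s : Finset V, G.IsClique (s : Set V) → s.card ≤ m)
    (d r : ℕ) (hr : r ≤ m - 2)
    (hcard : Fintype.card V = d * (m - 1) + r) :
    ∃ c : V → Fin m,
      (∀ u v, G.Adj u v → c u ≠ c v) ∧
      (∀ i : Fin m, (Finset.univ.filter fun v => c v = i).card
          ≤ (Fintype.card V + m - 2) / (m - 1)) ∧
      (r = 0 → ∃ i : Fin m, (Finset.univ.filter fun v => c v = i).card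
          < (Fintype.card V + m - 2) / (m - 1)) ∧
      (0 < r → m - r ≤ (Finset.univ.filter fun i : Fin m =>
          (Finset.univ.filter fun v => c v = i).card
            < (Fintype.card V + m - 2) / (m - 1)).card) := by
  classical
  obtain ⟨Bs, hBs⟩ := hG
  obtain ⟨c, hinj, hbal⟩ := BlockGraph.exists_injOn_isBalanced hm Bs
    (fun B hB => hω B (hBs.1 B hB)) fun _ _ _ => hBs.card_inter_le_one
  rw [hBs.biUnion_eq_univ, card_univ] at hbal
  refine ⟨c, fun _ _ => hBs.adj_ne_of_injOn hinj, hbal.le, fun hr0 => ?_, fun hr0 => ?_⟩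
  · subst hr0
    rw [hcard, add_zero, Nat.mul_add_sub_two_div hm]
    refine Fintype.exists_card_fiber_lt_of_card_lt_mul (f := c) ?_
    have hd : 0 < d := Nat.pos_of_ne_zero fun hd => by simp [hd] at hcard; omega
    have hmd : m * d = d * (m - 1) + d := by
      rw [mul_comm, ← Nat.mul_add_one, Nat.sub_add_cancel (by omega)]
    rw [hcard, add_zero, Fintype.card_fin, hmd]
    omega
  · have hceil : (Fintype.card V + m - 2) / (m - 1) = d + 1 :=
      Nat.div_eq_of_lt_le (by rw [Nat.add_one_mul]; omega)
        (by rw [Nat.add_one_mul, Nat.add_one_mul]; omega)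
    have hfloor : (Fintype.card V - r + m - 2) / (m - 1) = d := by
      rw [hcard, Nat.add_sub_cancel, Nat.mul_add_sub_two_div hm]
    refine (hfloor ▸ hbal.sub_le_card_filter_le (j := r) (by omega)).trans
      (card_le_card (monotone_filter_right _ fun x hx => ?_))
    omega

/-- A block graph `G` on `n = d(m-1) + r` vertices (`n ≥ 1`, `0 ≤ r ≤ m-2`) with clique
number at most `m` (`m ≥ 2`) has a proper `m`-coloring in which every color class has at
most `⌈n/(m-1)⌉` vertices; moreover if `r = 0` at least one class is strictly smaller
than `⌈n/(m-1)⌉`, and if `r > 0` at least `m - r` classes are strictly smaller.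
Here `⌈n/(m-1)⌉ = (n + m - 2)/(m - 1)` in natural number arithmetic. -/
theorem block_graph_balanced_coloring {V : Type*} [Fintype V] [DecidableEq V]
    (G : SimpleGraph V) (hG : IsBlockGraph G)
    (m : ℕ) (hm : 2 ≤ m)
    (hn : 1 ≤ Fintype.card V)
    (hω : ∀ s : Finset V, G.IsClique (s : Set V) → s.card ≤ m)
    (d r : ℕ) (hr : r ≤ m - 2)
    (hcard : Fintype.card V = d * (m - 1) + r) :
    ∃ c : V → Fin m,
      (∀ u v, G.Adj u v → c u ≠ c v) ∧
      (∀ i : Fin m, (Finset.univ.filter fun v => c v = i).card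
          ≤ (Fintype.card V + m - 2) / (m - 1)) ∧
      (r = 0 → ∃ i : Fin m, (Finset.univ.filter fun v => c v = i).card
          < (Fintype.card V + m - 2) / (m - 1)) ∧
      (0 < r → m - r ≤ (Finset.univ.filter fun i : Fin m =>
          (Finset.univ.filter fun v => c v = i).card
            < (Fintype.card V + m - 2) / (m - 1)).card) :=
  block_graph_balanced_coloring_general G hG m hm hn hω d r hr hcard
end

section
/- Let m ≥ 1 and k ≥ 1 be integers, and let G1, G2 be finite graphs with V(G1) ∩ V(G2) = {v} and with no edges between V(G1)∖{v} and V(G2)∖{v}; let G = G1 ∪ G2 (union of vertex sets and edge sets). Then a pattern (s, M) is feasible for (G, v, m, k) if and only if there exist a feasible pattern (s1, M1) for (G1, v, m, k) and a feasible pattern (s2, M2) for (G2, v, m, k) with s = s1 + s2 − 1 ≤ k, together with enumerations M1 = {a_1, …, a_{m−1}} and M2 = {b_1, …, b_{m−1}} (as multisets) such that a_t + b_t ≤ k for all 1 ≤ t ≤ m−1 and M = {a_1 + b_1, …, a_{m−1} + b_{m−1}} (as a multiset). -/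
/-!
A coloring of `G` restricts to colorings of the two parts, and each color class of `G` is
the union of its classes in the parts, which meet only in `v`: class sizes add, except that
`v` is counted twice in its own class. Conversely, two colorings of the parts glue to one of
`G` once the colors of the second part are permuted so that its color at `v` becomes that of
the first, and its class enumerated by `b t` receives the color of the class enumerated by
`a t`; properness survives because no edge joins the two parts outside `v`.
-/

/-- `(A, M)` is a feasible pattern for the graph `G` restricted to the vertex set `S`,
relative to the subset `W ⊆ S`, with `m` colors and class-size bound `k`: some coloring
of `S` that is proper for the edges of `G` inside `S`, has all color classes (within
`S`) of size at most `k`, and is injective on `W`, realizes `A` as the multiset of the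
class sizes of the colors used on `W` and `M` as the multiset of the class sizes of the
remaining colors. -/
def PatternFeasible {V : Type*} [Fintype V] [DecidableEq V]
    (G : SimpleGraph V) (S W : Finset V) (m k : ℕ)
    (A M : Multiset ℕ) : Prop :=
  W ⊆ S ∧
  ∃ c : V → Fin m,
    (∀ x ∈ S, ∀ y ∈ S, G.Adj x y → c x ≠ c y) ∧
    (∀ i : Fin m, (S.filter (fun x => c x = i)).card ≤ k) ∧
    Set.InjOn c (W : Set V) ∧
    A = (W.image c).val.map (fun i => (S.filter (fun x => c x = i)).card) ∧
    M = ((W.image c)ᶜ : Finset (Fin m)).val.map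
          (fun i => (S.filter (fun x => c x = i)).card)

open Finset

lemma List.Perm.exists_perm_apply_eq_ofFn {β : Type*} [LinearOrder β] {n : ℕ}
    {a a' : Fin n → β} (h : (List.ofFn a).Perm (List.ofFn a')) :
    ∃ ρ : Equiv.Perm (Fin n), ∀ t, a' (ρ t) = a t := by
  have hsorted : a ∘ Tuple.sort a = a' ∘ Tuple.sort a' :=
    List.ofFn_injective <|
      (((Tuple.sort a).ofFn_comp_perm a).trans
        (h.trans ((Tuple.sort a').ofFn_comp_perm a').symm)).eq_of_sortedLE
        (Tuple.monotone_sort a).sortedLE_ofFn (Tuple.monotone_sort a').sortedLE_ofFn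
  refine ⟨(Tuple.sort a).symm.trans (Tuple.sort a'), fun t => ?_⟩
  simpa using (congrFun hsorted ((Tuple.sort a).symm t)).symm

lemma Finset.val_map_eq_ofFn_iff {α β : Type*} [LinearOrder β] {n : ℕ} (T : Finset α)
    (f : α → β) (a : Fin n → β) :
    T.val.map f = (List.ofFn a : Multiset β) ↔ ∃ σ : Fin n ≃ T, ∀ t, f (σ t) = a t := by
  have hval : ∀ σ : Fin n ≃ T, T.val.map f = (List.ofFn (fun t => f (σ t)) : Multiset β) := by
    intro σ
    rw [← Multiset.attach_map_val T.val, ← Finset.attach_val, Multiset.map_map,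
      ← Finset.univ_eq_attach, ← Finset.map_univ_equiv σ, Finset.map_val, Multiset.map_map]
    exact Fin.univ_val_map _
  constructor
  · intro h
    have hcard : T.card = n := by simpa using congrArg Multiset.card h
    let e : Fin n ≃ T := (T.equivFin.trans (finCongr hcard)).symm
    rw [hval e] at h
    obtain ⟨ρ, hρ⟩ := (Multiset.coe_eq_coe.mp h).symm.exists_perm_apply_eq_ofFn
    exact ⟨ρ.trans e, hρ⟩
  · rintro ⟨σ, hσ⟩
    rw [hval σ, funext hσ]

lemma Finset.compl_singleton_val_map_eq_ofFn_iff {α β : Type*} [Fintype α] [DecidableEq α]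
    [LinearOrder β] {n : ℕ} (y : α) (f : α → β) (a : Fin n → β) :
    ({y}ᶜ : Finset α).val.map f = (List.ofFn a : Multiset β) ↔
      ∃ σ : Fin n ≃ {i // i ≠ y}, ∀ t, f (σ t) = a t := by
  let e : ({y}ᶜ : Finset α) ≃ {i // i ≠ y} := Equiv.subtypeEquivRight (by simp)
  rw [Finset.val_map_eq_ofFn_iff]
  exact ⟨fun ⟨σ, hσ⟩ => ⟨σ.trans e, hσ⟩, fun ⟨σ, hσ⟩ => ⟨σ.trans e.symm, hσ⟩⟩

lemma Equiv.Perm.exists_extend_compl_singleton {α : Type*} [DecidableEq α] (x y : α)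
    (e : {i // i ≠ x} ≃ {i // i ≠ y}) :
    ∃ π : Equiv.Perm α, π x = y ∧ ∀ i : {i // i ≠ x}, π i = e i :=
  ⟨(Equiv.optionSubtypeNe x).symm.trans (e.optionCongr.trans (Equiv.optionSubtypeNe y)),
    by simp, fun i => by simp [Equiv.optionSubtypeNe_symm_of_ne i.2]⟩

section ClassSize

variable {V α : Type*} [DecidableEq α]

def classSize (S : Finset V) (c : V → α) (i : α) : ℕ := #{x ∈ S | c x = i}

lemma classSize_congr {S : Finset V} {c c' : V → α} (h : ∀ x ∈ S, c x = c' x) :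
    classSize S c = classSize S c' :=
  funext fun _ => congrArg card (filter_congr fun x hx => by rw [h x hx])

lemma classSize_mono {S T : Finset V} (hST : S ⊆ T) (c : V → α) (i : α) :
    classSize S c i ≤ classSize T c i :=
  card_le_card (filter_subset_filter _ hST)

lemma classSize_comp_apply {S : Finset V} (c : V → α) {π : α → α}
    (hπ : Function.Injective π) (i : α) :
    classSize S (π ∘ c) (π i) = classSize S c i := by
  simp only [classSize, Function.comp_apply, hπ.eq_iff]

lemma one_le_classSize_self {S : Finset V} {v : V} (hv : v ∈ S) (c : V → α) :
    1 ≤ classSize S c (c v) :=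
  card_pos.mpr ⟨v, mem_filter.mpr ⟨hv, rfl⟩⟩

lemma classSize_union_add_ite [DecidableEq V] {S1 S2 : Finset V} {v : V}
    (hGlue : S1 ∩ S2 = {v}) (c : V → α) (i : α) :
    classSize (S1 ∪ S2) c i + (if c v = i then 1 else 0) =
      classSize S1 c i + classSize S2 c i := by
  rw [classSize, classSize, classSize, ← card_union_add_card_inter, ← filter_union,
    ← filter_inter_distrib, hGlue, filter_singleton]
  split <;> rfl

end ClassSize

section Gluing

variable {V α : Type*} [DecidableEq V] {S1 S2 : Finset V} {v : V} {c1 c2 : V → α}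

lemma piecewise_eq_right_of_inter_eq_singleton (hGlue : S1 ∩ S2 = {v}) (hv : c1 v = c2 v)
    {x : V} (hx : x ∈ S2) : S1.piecewise c1 c2 x = c2 x := by
  by_cases hx1 : x ∈ S1
  · obtain rfl : x = v := mem_singleton.mp (hGlue ▸ mem_inter.mpr ⟨hx1, hx⟩)
    rw [piecewise_eq_of_mem _ _ _ hx1, hv]
  · exact piecewise_eq_of_notMem _ _ _ hx1

lemma classSize_piecewise_add_ite [DecidableEq α] (hGlue : S1 ∩ S2 = {v})
    (hv : c1 v = c2 v) (i : α) :
    classSize (S1 ∪ S2) (S1.piecewise c1 c2) i + (if c1 v = i then 1 else 0) =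
      classSize S1 c1 i + classSize S2 c2 i := by
  have hv1 : v ∈ S1 := (mem_inter.mp (hGlue ▸ mem_singleton_self v)).1
  rw [← piecewise_eq_of_mem S1 c1 c2 hv1, classSize_union_add_ite hGlue,
    classSize_congr fun x hx => piecewise_eq_of_mem S1 c1 c2 hx,
    classSize_congr fun x hx => piecewise_eq_right_of_inter_eq_singleton hGlue hv hx]

lemma piecewise_ne_of_adj {G : SimpleGraph V}
    (hEdges : ∀ x y : V, G.Adj x y → (x ∈ S1 ∧ y ∈ S1) ∨ (x ∈ S2 ∧ y ∈ S2))
    (hGlue : S1 ∩ S2 = {v}) (hv : c1 v = c2 v)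
    (h1 : ∀ x ∈ S1, ∀ y ∈ S1, G.Adj x y → c1 x ≠ c1 y)
    (h2 : ∀ x ∈ S2, ∀ y ∈ S2, G.Adj x y → c2 x ≠ c2 y) {x y : V} (hxy : G.Adj x y) :
    S1.piecewise c1 c2 x ≠ S1.piecewise c1 c2 y := by
  rcases hEdges x y hxy with ⟨hx, hy⟩ | ⟨hx, hy⟩
  · rw [piecewise_eq_of_mem _ _ _ hx, piecewise_eq_of_mem _ _ _ hy]
    exact h1 x hx y hy hxy
  · rw [piecewise_eq_right_of_inter_eq_singleton hGlue hv hx,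
      piecewise_eq_right_of_inter_eq_singleton hGlue hv hy]
    exact h2 x hx y hy hxy

end Gluing

section Pattern

variable {V : Type*} [Fintype V] [DecidableEq V] {G : SimpleGraph V} {m k : ℕ}

lemma patternFeasible_singleton_iff {S : Finset V} {v : V} {s : ℕ} {M : Multiset ℕ} :
    PatternFeasible G S {v} m k {s} M ↔ v ∈ S ∧ ∃ c : V → Fin m,
      (∀ x ∈ S, ∀ y ∈ S, G.Adj x y → c x ≠ c y) ∧ (∀ i, classSize S c i ≤ k) ∧
      s = classSize S c (c v) ∧ M = ({c v}ᶜ : Finset (Fin m)).val.map (classSize S c) := by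
  simp only [PatternFeasible, singleton_subset_iff, coe_singleton, Set.injOn_singleton,
    true_and, image_singleton, singleton_val, Multiset.map_singleton, Multiset.singleton_inj]
  rfl

variable {S1 S2 : Finset V} {v : V}

theorem exists_patterns_of_patternFeasible_univ (hGlue : S1 ∩ S2 = {v})
    (hCover : S1 ∪ S2 = univ) {s : ℕ} {M : Multiset ℕ}
    (h : PatternFeasible G univ {v} m k {s} M) :
    ∃ (s1 : ℕ) (M1 : Multiset ℕ) (s2 : ℕ) (M2 : Multiset ℕ) (a b : Fin (m - 1) → ℕ),
      PatternFeasible G S1 {v} m k {s1} M1 ∧ PatternFeasible G S2 {v} m k {s2} M2 ∧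
      s = s1 + s2 - 1 ∧ s ≤ k ∧ M1 = (List.ofFn a : Multiset ℕ) ∧
      M2 = (List.ofFn b : Multiset ℕ) ∧ (∀ t, a t + b t ≤ k) ∧
      M = (List.ofFn (fun t => a t + b t) : Multiset ℕ) := by
  obtain ⟨-, c, hproper, hbound, rfl, rfl⟩ := patternFeasible_singleton_iff.mp h
  have hv : v ∈ S1 ∩ S2 := hGlue ▸ mem_singleton_self v
  have hcount := classSize_union_add_ite hGlue c
  rw [hCover] at hcount
  have hrestrict : ∀ S : Finset V, v ∈ S → PatternFeasible G S {v} m k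
      {classSize S c (c v)} (({c v}ᶜ : Finset (Fin m)).val.map (classSize S c)) :=
    fun S hvS => patternFeasible_singleton_iff.mpr ⟨hvS, c,
      fun x _ y _ => hproper x (mem_univ x) y (mem_univ y),
      fun i => (classSize_mono (subset_univ S) c i).trans (hbound i), rfl, rfl⟩
  obtain ⟨σ⟩ : Nonempty (Fin (m - 1) ≃ {i // i ≠ c v}) :=
    ⟨(finCongr (by simp)).trans (Fintype.equivFin _).symm⟩
  have hcount_ne : ∀ t, classSize univ c (σ t) = classSize S1 c (σ t) + classSize S2 c (σ t) :=
    fun t => by simpa [Ne.symm (σ t).2] using hcount (σ t)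
  refine ⟨_, _, _, _, fun t => classSize S1 c (σ t), fun t => classSize S2 c (σ t),
    hrestrict S1 (mem_inter.mp hv).1, hrestrict S2 (mem_inter.mp hv).2, ?_, hbound _,
    (compl_singleton_val_map_eq_ofFn_iff _ _ _).mpr ⟨σ, fun _ => rfl⟩,
    (compl_singleton_val_map_eq_ofFn_iff _ _ _).mpr ⟨σ, fun _ => rfl⟩,
    fun t => hcount_ne t ▸ hbound _,
    (compl_singleton_val_map_eq_ofFn_iff _ _ _).mpr ⟨σ, hcount_ne⟩⟩
  have := hcount (c v)
  rw [if_pos rfl] at this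
  omega

theorem patternFeasible_univ_of_patterns (hGlue : S1 ∩ S2 = {v}) (hCover : S1 ∪ S2 = univ)
    (hEdges : ∀ x y : V, G.Adj x y → (x ∈ S1 ∧ y ∈ S1) ∨ (x ∈ S2 ∧ y ∈ S2))
    {s1 s2 : ℕ} {M1 M2 : Multiset ℕ} {a b : Fin (m - 1) → ℕ}
    (h1 : PatternFeasible G S1 {v} m k {s1} M1) (h2 : PatternFeasible G S2 {v} m k {s2} M2)
    (hsk : s1 + s2 - 1 ≤ k) (ha : M1 = (List.ofFn a : Multiset ℕ))
    (hb : M2 = (List.ofFn b : Multiset ℕ)) (hab : ∀ t, a t + b t ≤ k) :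
    PatternFeasible G univ {v} m k {s1 + s2 - 1}
      (List.ofFn (fun t => a t + b t) : Multiset ℕ) := by
  obtain ⟨hv1, c1, hproper1, -, rfl, rfl⟩ := patternFeasible_singleton_iff.mp h1
  obtain ⟨-, c2, hproper2, -, rfl, rfl⟩ := patternFeasible_singleton_iff.mp h2
  obtain ⟨σ1, hσ1⟩ := (compl_singleton_val_map_eq_ofFn_iff _ _ _).mp ha
  obtain ⟨σ2, hσ2⟩ := (compl_singleton_val_map_eq_ofFn_iff _ _ _).mp hb
  -- permute the colors of the second part so that its class `σ2 t` is merged with `σ1 t`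
  obtain ⟨π, hπv, hπσ⟩ :=
    Equiv.Perm.exists_extend_compl_singleton (c2 v) (c1 v) (σ2.symm.trans σ1)
  have hv : c1 v = (π ∘ c2) v := hπv.symm
  set c := S1.piecewise c1 (π ∘ c2)
  have hcv : c v = c1 v := piecewise_eq_of_mem _ _ _ hv1
  have hcount : ∀ j, classSize univ c (π j) + (if c2 v = j then 1 else 0) =
      classSize S1 c1 (π j) + classSize S2 c2 j := by
    intro j
    rw [← hCover, ← classSize_comp_apply c2 π.injective, ← classSize_piecewise_add_ite hGlue hv]
    simp only [c, hv, Function.comp_apply, π.injective.eq_iff]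
  have hcount_v : classSize univ c (c1 v) + 1 =
      classSize S1 c1 (c1 v) + classSize S2 c2 (c2 v) := by
    simpa [hπv] using hcount (c2 v)
  have hcount_ne : ∀ t, classSize univ c (σ1 t) = a t + b t := by
    intro t
    have := hcount (σ2 t)
    rwa [if_neg (σ2 t).2.symm, add_zero, hπσ, Equiv.trans_apply, Equiv.symm_apply_apply,
      hσ1, hσ2] at this
  have hs1 := one_le_classSize_self hv1 c1
  refine patternFeasible_singleton_iff.mpr ⟨mem_univ v, c, ?_, fun i => ?_, ?_, ?_⟩
  · exact fun x _ y _ => piecewise_ne_of_adj hEdges hGlue hv hproper1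
      (fun x hx y hy hxy => π.injective.ne (hproper2 x hx y hy hxy))
  · by_cases hi : i = c1 v
    · subst hi
      omega
    · obtain ⟨t, ht⟩ := σ1.surjective ⟨i, hi⟩
      rw [← show (σ1 t : Fin m) = i from congrArg Subtype.val ht, hcount_ne]
      exact hab t
  · rw [hcv]
    omega
  · rw [hcv]
    exact ((compl_singleton_val_map_eq_ofFn_iff _ _ _).mpr ⟨σ1, hcount_ne⟩).symm

end Pattern

theorem pattern_merge_at_cut_vertex_general {V : Type*} [Fintype V] [DecidableEq V]
    (m k : ℕ)
    (G : SimpleGraph V) (S1 S2 : Finset V) (v : V)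
    (hGlue : S1 ∩ S2 = {v}) (hCover : S1 ∪ S2 = Finset.univ)
    (hEdges : ∀ x y : V, G.Adj x y → (x ∈ S1 ∧ y ∈ S1) ∨ (x ∈ S2 ∧ y ∈ S2))
    (s : ℕ) (M : Multiset ℕ) :
    PatternFeasible G Finset.univ {v} m k {s} M ↔
      ∃ (s1 : ℕ) (M1 : Multiset ℕ) (s2 : ℕ) (M2 : Multiset ℕ)
        (a b : Fin (m - 1) → ℕ),
        PatternFeasible G S1 {v} m k {s1} M1 ∧
        PatternFeasible G S2 {v} m k {s2} M2 ∧
        s = s1 + s2 - 1 ∧ s ≤ k ∧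
        M1 = (List.ofFn a : Multiset ℕ) ∧
        M2 = (List.ofFn b : Multiset ℕ) ∧
        (∀ t : Fin (m - 1), a t + b t ≤ k) ∧
        M = (List.ofFn (fun t => a t + b t) : Multiset ℕ) := by
  constructor
  · exact exists_patterns_of_patternFeasible_univ hGlue hCover
  · rintro ⟨s1, M1, s2, M2, a, b, h1, h2, rfl, hsk, ha, hb, hab, rfl⟩
    exact patternFeasible_univ_of_patterns hGlue hCover hEdges h1 h2 hsk ha hb hab

/-- Merging patterns at a common cut-vertex: if `G` is the union of two graphs with
vertex sets `S1` and `S2` sharing exactly the vertex `v` (every edge lies inside `S1`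
or inside `S2`), then `(s, M)` is a feasible pattern for `(G, v, m, k)` iff it arises
from feasible patterns `(s1, M1)` and `(s2, M2)` of the two parts with
`s = s1 + s2 - 1 ≤ k`, via enumerations `a`, `b` of `M1`, `M2` with `a t + b t ≤ k`
for all `t` and `M = {a t + b t}`. -/
theorem pattern_merge_at_cut_vertex {V : Type*} [Fintype V] [DecidableEq V]
    (m k : ℕ) (hm : 1 ≤ m) (hk : 1 ≤ k)
    (G : SimpleGraph V) (S1 S2 : Finset V) (v : V)
    (hGlue : S1 ∩ S2 = {v}) (hCover : S1 ∪ S2 = Finset.univ)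
    (hEdges : ∀ x y : V, G.Adj x y → (x ∈ S1 ∧ y ∈ S1) ∨ (x ∈ S2 ∧ y ∈ S2))
    (s : ℕ) (M : Multiset ℕ) :
    PatternFeasible G Finset.univ {v} m k {s} M ↔
      ∃ (s1 : ℕ) (M1 : Multiset ℕ) (s2 : ℕ) (M2 : Multiset ℕ)
        (a b : Fin (m - 1) → ℕ),
        PatternFeasible G S1 {v} m k {s1} M1 ∧
        PatternFeasible G S2 {v} m k {s2} M2 ∧
        s = s1 + s2 - 1 ∧ s ≤ k ∧
        M1 = (List.ofFn a : Multiset ℕ) ∧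
        M2 = (List.ofFn b : Multiset ℕ) ∧
        (∀ t : Fin (m - 1), a t + b t ≤ k) ∧
        M = (List.ofFn (fun t => a t + b t) : Multiset ℕ) :=
  pattern_merge_at_cut_vertex_general m k G S1 S2 v hGlue hCover hEdges s M
end
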